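/- arXiv:2004.03885 — 4 statements merged into one kernel-verified Lean document; each statement's English description precedes it below -/
import Mathlib

section
/- Let d ≥ 3, m ≥ 1, ω ∈ Ω_{d,m}, and ξ, η ∈ X^ℕ. Then Γ_ξ and Γ_η are isomorphic as unrooted, undirected, unlabeled graphs (i.e. there is a bijection Cof(ξ) → Cof(η) preserving edge multiplicities, with no condition on roots) if and only if there exists η' ∈ Cof(η) such that ξ ∼ η'. -/
/-!
A multiplicity-preserving bijection `φ : Cof ξ ≃ Cof η` extends to an automorphism `Φ` of the
Schreier graph on all of `X^ℕ`. Such a `Φ` preserves spines (words `(d-1)^r 0 ⋯`, the only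
vertices with fewer loops), `b`-edges (for `d ≥ 3`, the edges between spines all of whose common
neighbours are spines) and `a`-edges. By induction on `p` it then preserves the relation "agree
from position `p` on": this relation is generated by the previous one together with the `b`-edges
of level `p - 2`, and that level is recognised inside the classes of the previous relation.
Zeros of a word and the runs of `d-1` in front of them are read off these relations, so `ξ` is
compatible with `Φ ξ ∈ Cof η`.

Conversely, if `ξ ∼ η'`, recode every word letter by letter, swapping the letters of `ξ` and
`η'` position by position but never moving `0`, nor `d-1` when it is followed by a block
`(d-1)^k 0`. This bijection preserves spines, edges and cofinality, hence multiplicities, and it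
maps `ξ` to `η'`.
-/

open MeasureTheory

noncomputable section

/-- The boundary of the `d`-regular rooted tree: infinite words over `X = {0,…,d-1}`,
identified with `ZMod d`. -/
abbrev Bd (d : ℕ) : Type := ℕ → ZMod d
/-- The rooted automorphism `a`: adds 1 (mod `d`) to the first letter. -/
def aMap (d : ℕ) (ξ : Bd d) : Bd d := fun n => if n = 0 then ξ 0 + 1 else ξ n

open scoped Classical in
/-- The spinal automorphism `b_ω`: if `ξ` starts with `(d-1)^r 0`, add `ω r b` to the
letter at position `r + 1`; otherwise fix `ξ`. -/
def bMap (d m : ℕ) (ω : ℕ → ((Fin m → ZMod d) →+ ZMod d)) (b : Fin m → ZMod d)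
    (ξ : Bd d) : Bd d := fun n =>
  if n ≠ 0 ∧ (∀ i, i < n - 1 → ξ i = (d : ZMod d) - 1) ∧ ξ (n - 1) = 0 then
    ξ n + ω (n - 1) b
  else ξ n
/-- The spinal generating set `S = {a^j : 1 ≤ j ≤ d-1} ∪ {b_ω : b ∈ B ∖ {0}}`,
as a set of self-maps of the boundary. -/
def genSet (d m : ℕ) (ω : ℕ → ((Fin m → ZMod d) →+ ZMod d)) : Set (Bd d → Bd d) :=
  {f | ∃ j, 1 ≤ j ∧ j ≤ d - 1 ∧ f = (aMap d)^[j]} ∪ {f | ∃ b, b ≠ 0 ∧ f = bMap d m ω b}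
/-- Membership in `Ω_{d,m}`: all `ω_n` are surjective and `⋂_{j ≥ i} ker ω_j = {0}`
for every `i ≥ 0`. -/
def InOmega (d m : ℕ) (ω : ℕ → ((Fin m → ZMod d) →+ ZMod d)) : Prop :=
  (∀ n, Function.Surjective (ω n)) ∧
  ∀ i : ℕ, ∀ b : Fin m → ZMod d, (∀ j, i ≤ j → ω j b = 0) → b = 0
/-- Two boundary points are cofinal if they agree at all sufficiently large positions. -/
def Cofinal {d : ℕ} (ξ η : Bd d) : Prop := ∃ N, ∀ n, N ≤ n → ξ n = η n

/-- The cofinality class of `ξ`. -/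
def Cof {d : ℕ} (ξ : Bd d) : Set (Bd d) := {η | Cofinal ξ η}

theorem self_mem_Cof {d : ℕ} (ξ : Bd d) : ξ ∈ Cof ξ := ⟨0, fun _ _ => rfl⟩
/-- Edge multiplicity in the Schreier graph `Γ_ξ`:
`mult(u, v) = card {s ∈ S : s · u = v}`. -/
def mult (d m : ℕ) (ω : ℕ → ((Fin m → ZMod d) →+ ZMod d)) (u v : Bd d) : ℕ :=
  Nat.card {f : Bd d → Bd d // f ∈ genSet d m ω ∧ f u = v}
/-- `ξ` has at least `r` consecutive letters `d-1` immediately before position `p`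
(i.e. the block of `ξ` preceding position `p` ends in `(d-1)^r`). -/
def EndsIn (d : ℕ) (ξ : Bd d) (p r : ℕ) : Prop :=
  r ≤ p ∧ ∀ i, p - r ≤ i → i < p → ξ i = (d : ZMod d) - 1

/-- Compatibility `ξ ∼ η`: zeros at exactly the same positions, and before each zero the
maximal runs of the letter `d-1` have the same length (equivalently, the corresponding
finite blocks end in `(d-1)^r` for exactly the same `r`'s). -/
def Compatible (d : ℕ) (ξ η : Bd d) : Prop :=
  (∀ n, ξ n = 0 ↔ η n = 0) ∧
  ∀ p, ξ p = 0 → ∀ r, (EndsIn d ξ p r ↔ EndsIn d η p r)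

theorem Cofinal.symm {d : ℕ} {ξ η : Bd d} (h : Cofinal ξ η) : Cofinal η ξ :=
  let ⟨N, hN⟩ := h; ⟨N, fun n hn => (hN n hn).symm⟩

theorem Cofinal.trans {d : ℕ} {ξ η ζ : Bd d} (h : Cofinal ξ η) (h' : Cofinal η ζ) :
    Cofinal ξ ζ :=
  let ⟨N, hN⟩ := h
  let ⟨M, hM⟩ := h'
  ⟨max N M, fun n hn => (hN n (le_of_max_le_left hn)).trans (hM n (le_of_max_le_right hn))⟩

namespace SpinalGraph

variable {d m : ℕ} {ω : ℕ → ((Fin m → ZMod d) →+ ZMod d)} {u v w : Bd d} {p r s n : ℕ}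

instance [Fact (2 < d)] : Fact (1 < d) := ⟨by have : 2 < d := Fact.out; omega⟩

section Spines

-- The letter `d - 1` is `-1 : ZMod d`.
def SpineAt (u : Bd d) (r : ℕ) : Prop := (∀ i < r, u i = -1) ∧ u r = 0

def Spine (u : Bd d) : Prop := ∃ r, SpineAt u r

theorem SpineAt.congr (h : SpineAt u r) (huv : ∀ n ≤ r, u n = v n) : SpineAt v r :=
  ⟨fun i hi => huv i hi.le ▸ h.1 i hi, huv r le_rfl ▸ h.2⟩

theorem SpineAt.eq_of_le (hu : SpineAt u r) (hv : SpineAt v r) (hn : n ≤ r) : u n = v n := by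
  rcases hn.lt_or_eq with hn | rfl
  · rw [hu.1 n hn, hv.1 n hn]
  · rw [hu.2, hv.2]

theorem SpineAt.unique [Fact (1 < d)] (hr : SpineAt u r) (hs : SpineAt u s) : r = s := by
  by_contra hne
  rcases Nat.lt_or_gt_of_ne hne with h | h
  · exact neg_ne_zero.2 one_ne_zero ((hs.1 r h).symm.trans hr.2)
  · exact neg_ne_zero.2 one_ne_zero ((hr.1 s h).symm.trans hs.2)

def withSpinePrefix (p : ℕ) (u : Bd d) : Bd d :=
  fun n => if n < p then -1 else if n = p then 0 else u n

theorem spineAt_withSpinePrefix : SpineAt (withSpinePrefix p u) p :=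
  ⟨fun i hi => by simp [withSpinePrefix, hi], by simp [withSpinePrefix]⟩

theorem withSpinePrefix_of_lt (h : p < n) : withSpinePrefix p u n = u n := by
  simp [withSpinePrefix, h.not_gt, h.ne']

end Spines

section Edges

def AEdge (u v : Bd d) : Prop := u 0 ≠ v 0 ∧ ∀ n ≠ 0, u n = v n

def BEdgeAt (u v : Bd d) (r : ℕ) : Prop :=
  SpineAt u r ∧ u (r + 1) ≠ v (r + 1) ∧ ∀ n ≠ r + 1, u n = v n

def BEdge (u v : Bd d) : Prop := ∃ r, BEdgeAt u v r

def AgreeFrom (p : ℕ) (u v : Bd d) : Prop := ∀ n, p ≤ n → u n = v n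

theorem AgreeFrom.symm (h : AgreeFrom p u v) : AgreeFrom p v u := fun n hn => (h n hn).symm

theorem AgreeFrom.trans (h : AgreeFrom p u v) (h' : AgreeFrom p v w) : AgreeFrom p u w :=
  fun n hn => (h n hn).trans (h' n hn)

theorem AgreeFrom.mono (hpq : p ≤ s) (h : AgreeFrom p u v) : AgreeFrom s u v :=
  fun n hn => h n (hpq.trans hn)

theorem AgreeFrom.cofinal (h : AgreeFrom p u v) : Cofinal u v := ⟨p, h⟩

theorem agreeFrom_zero_iff : AgreeFrom 0 u v ↔ u = v :=
  ⟨fun h => funext fun n => h n n.zero_le, fun h _ _ => h ▸ rfl⟩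

theorem agreeFrom_withSpinePrefix : AgreeFrom (p + 1) (withSpinePrefix p u) u :=
  fun _ hn => withSpinePrefix_of_lt hn

theorem AEdge.agreeFrom (h : AEdge u v) : AgreeFrom 1 u v :=
  fun n hn => h.2 n (Nat.one_le_iff_ne_zero.1 hn)

theorem AEdge.ne (h : AEdge u v) : u ≠ v := fun e => h.1 (congrFun e 0)

theorem BEdgeAt.ne (h : BEdgeAt u v r) : u ≠ v := fun e => h.2.1 (congrFun e (r + 1))

theorem BEdgeAt.spineAt_right (h : BEdgeAt u v r) : SpineAt v r :=
  h.1.congr fun n hn => h.2.2 n (by omega)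

theorem BEdgeAt.agreeFrom (h : BEdgeAt u v r) : AgreeFrom (r + 2) u v :=
  fun n hn => h.2.2 n (by omega)

theorem BEdgeAt.not_agreeFrom (h : BEdgeAt u v r) (hp : p ≤ r + 1) : ¬ AgreeFrom p u v :=
  fun h' => h.2.1 (h' (r + 1) hp)

theorem SpineAt.bEdgeAt_update [Fact (1 < d)] (h : SpineAt u r) :
    BEdgeAt u (Function.update u (r + 1) (u (r + 1) + 1)) r :=
  ⟨h, by simp, fun _ hn => (Function.update_of_ne hn _ _).symm⟩

theorem bEdgeAt_iff_bEdge_and_spineAt [Fact (1 < d)] :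
    BEdgeAt u v p ↔ BEdge u v ∧ SpineAt u p :=
  ⟨fun h => ⟨⟨p, h⟩, h.1⟩, fun ⟨⟨_, h⟩, hp⟩ => h.1.unique hp ▸ h⟩

theorem agreeFrom_one_iff : AgreeFrom 1 u v ↔ u = v ∨ AEdge u v := by
  refine ⟨fun h => ?_, ?_⟩
  · by_cases h0 : u 0 = v 0
    · exact Or.inl (funext fun n => n.eq_zero_or_pos.elim (· ▸ h0) (h n))
    · exact Or.inr ⟨h0, fun n hn => h n (Nat.one_le_iff_ne_zero.2 hn)⟩
  · rintro (rfl | h)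
    · exact fun _ _ => rfl
    · exact h.agreeFrom

theorem agreeFrom_add_two_iff :
    AgreeFrom (p + 2) u v ↔ ∃ u' v', AgreeFrom (p + 1) u u' ∧ (u' = v' ∨ BEdgeAt u' v' p) ∧
      AgreeFrom (p + 1) v' v := by
  refine ⟨fun h => ?_, ?_⟩
  · refine ⟨withSpinePrefix p u, Function.update (withSpinePrefix p u) (p + 1) (v (p + 1)),
      agreeFrom_withSpinePrefix.symm, ?_, ?_⟩
    · by_cases hv : withSpinePrefix p u (p + 1) = v (p + 1)
      · exact Or.inl (by rw [← hv, Function.update_eq_self])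
      · exact Or.inr ⟨spineAt_withSpinePrefix, by simpa using hv,
          fun n hn => (Function.update_of_ne hn _ _).symm⟩
    · intro n hn
      rcases hn.eq_or_lt with rfl | hn
      · simp
      · rw [Function.update_of_ne hn.ne', agreeFrom_withSpinePrefix n (by omega), h n hn]
  · rintro ⟨u', v', hu, rfl | huv, hv⟩
    · exact (hu.trans hv).mono (by omega)
    · exact ((hu.mono (by omega)).trans huv.agreeFrom).trans (hv.mono (by omega))

end Edges

section Levels

def SpineAtLeast (p : ℕ) (u : Bd d) : Prop := ∃ r, p ≤ r ∧ SpineAt u r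

theorem spineAtLeast_iff [Fact (1 < d)] :
    SpineAtLeast p u ↔ ∃ v, BEdge u v ∧ ¬ AgreeFrom (p + 1) u v := by
  refine ⟨fun ⟨r, hpr, hr⟩ => ⟨_, ⟨r, hr.bEdgeAt_update⟩, hr.bEdgeAt_update.not_agreeFrom
    (by omega)⟩, fun ⟨v, ⟨r, hr⟩, hv⟩ => ⟨r, ?_, hr.1⟩⟩
  by_contra hrp
  exact hv (hr.agreeFrom.mono (by omega))

/-- At level `p`, the member of the `b`-clique of `u` with letter `1` at position `p + 1` is the
only spine of level `≥ p` in its `AgreeFrom (p + 1)`-class; at a higher level, each of these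
classes also contains a spine of level `p`. -/
theorem spineAt_iff [Fact (2 < d)] :
    SpineAt u p ↔ SpineAtLeast p u ∧ ∃ w, (w = u ∨ BEdge u w) ∧
      ∀ w₁, AgreeFrom (p + 1) w w₁ → SpineAtLeast p w₁ → w₁ = w := by
  refine ⟨fun hu => ⟨⟨p, le_rfl, hu⟩, Function.update u (p + 1) 1, ?_, ?_⟩, ?_⟩
  · by_cases h1 : u (p + 1) = 1
    · exact Or.inl (by rw [← h1, Function.update_eq_self])
    · exact Or.inr ⟨p, hu, by simpa [eq_comm] using h1,
        fun n hn => (Function.update_of_ne hn _ _).symm⟩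
  · rintro w₁ hw₁ ⟨ℓ, hpℓ, hℓ⟩
    have h1 : w₁ (p + 1) = 1 := by rw [← hw₁ (p + 1) le_rfl]; simp
    obtain rfl : ℓ = p := by
      by_contra hne
      rcases (show p + 1 ≤ ℓ by omega).lt_or_eq with h | h
      · exact ZMod.neg_one_ne_one (h1 ▸ hℓ.1 (p + 1) h).symm
      · exact one_ne_zero (h1 ▸ h ▸ hℓ.2)
    funext n
    rcases le_or_gt n ℓ with hn | hn
    · exact hℓ.eq_of_le (hu.congr fun i hi => (Function.update_of_ne (by omega) _ _).symm) hn
    · exact (hw₁ n hn).symm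
  · rintro ⟨⟨s, hps, hs⟩, w, hw, hall⟩
    obtain rfl | hlt := hps.eq_or_lt
    · exact hs
    have hws : SpineAt w s := by
      rcases hw with rfl | ⟨r, hr⟩
      · exact hs
      · exact hr.1.unique hs ▸ hr.spineAt_right
    have h0 : withSpinePrefix p w p = 0 := spineAt_withSpinePrefix.2
    rw [hall _ agreeFrom_withSpinePrefix.symm ⟨p, le_rfl, spineAt_withSpinePrefix⟩,
      hws.1 p hlt] at h0
    exact absurd h0 (neg_ne_zero.2 one_ne_zero)

theorem endsIn_zero : EndsIn d u p 0 := ⟨p.zero_le, fun _ _ h => absurd h (by omega)⟩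

theorem zero_and_endsIn_iff (hr : r ≤ p) :
    u p = 0 ∧ EndsIn d u p r ↔ ∃ v, AgreeFrom (p - r) v u ∧ SpineAt v p := by
  simp only [EndsIn, ZMod.natCast_self, zero_sub, hr, true_and]
  refine ⟨fun ⟨h0, hrun⟩ => ⟨withSpinePrefix p u, fun n hn => ?_, spineAt_withSpinePrefix⟩,
    fun ⟨v, hv, hvp⟩ => ⟨hv p (by omega) ▸ hvp.2, fun i hi hip => hv i hi ▸ hvp.1 i hip⟩⟩
  rcases lt_trichotomy n p with hnp | rfl | hnp
  · rw [hrun n hn hnp]; simp [withSpinePrefix, hnp]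
  · rw [h0]; simp [withSpinePrefix]
  · exact withSpinePrefix_of_lt hnp

theorem endsIn_sub_iff (h : n < p) :
    EndsIn d u p (p - n) ↔ u n = -1 ∧ EndsIn d u p (p - (n + 1)) := by
  simp only [EndsIn, ZMod.natCast_self, zero_sub, Nat.sub_sub_self h.le, Nat.sub_sub_self h,
    Nat.sub_le, true_and]
  refine ⟨fun H => ⟨H n le_rfl h, fun i hi => H i (by omega)⟩, fun ⟨h0, H⟩ i hi hip => ?_⟩
  rcases hi.eq_or_lt with rfl | hi
  exacts [h0, H i hi hip]

end Levels

section Multiplicities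

theorem card_fiber_eq_card_ker {G H : Type*} [AddGroup G] [AddGroup H] (f : G →+ H) (b₀ : G) :
    Nat.card {b // f b = f b₀} = Nat.card f.ker :=
  Nat.card_congr ((Equiv.subRight b₀).subtypeEquiv fun b => by simp [sub_eq_zero])

theorem card_subtype_ne_and_add_one {α : Type*} [Finite α] {P : α → Prop} {a : α} (ha : P a) :
    Nat.card {x // x ≠ a ∧ P x} + 1 = Nat.card {x // P x} := by
  calc Nat.card {x // x ≠ a ∧ P x} + 1 = Set.ncard ({x | P x} \ {a}) + 1 := by
        rw [← Nat.card_coe_set_eq]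
        exact congrArg (· + 1) (Nat.card_congr (Equiv.subtypeEquivRight fun x => by
          simp [and_comm]))
    _ = Nat.card {x // P x} := by
        rw [Set.ncard_sdiff_singleton_add_one (s := {x | P x}) ha (Set.toFinite _),
          ← Nat.card_coe_set_eq]
        rfl

theorem aMap_iterate (j : ℕ) (u : Bd d) :
    (aMap d)^[j] u = Function.update u 0 (u 0 + j) := by
  induction j with
  | zero => simp
  | succ j ih =>
    rw [Function.iterate_succ_apply', ih]
    funext n
    rcases eq_or_ne n 0 with rfl | hn
    · simp [aMap, add_assoc]
    · simp [aMap, hn]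

theorem bMap_apply_zero (b : Fin m → ZMod d) (u : Bd d) : bMap d m ω b u 0 = u 0 := by
  simp [bMap]

theorem bMap_of_not_spine (b : Fin m → ZMod d) (h : ¬ Spine u) : bMap d m ω b u = u := by
  funext n
  simp only [bMap, ZMod.natCast_self, zero_sub]
  exact if_neg fun ⟨_, hlt, h0⟩ => h ⟨n - 1, hlt, h0⟩

theorem natCast_ne_zero_of_lt {j : ℕ} (h1 : 1 ≤ j) (h2 : j < d) : (j : ZMod d) ≠ 0 :=
  (ZMod.natCast_eq_zero_iff j d).not.2 (Nat.not_dvd_of_pos_of_lt h1 h2)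

theorem aMap_iterate_inj {j j' : ℕ} (hj : j < d) (hj' : j' < d)
    (h : (aMap d)^[j] = (aMap d)^[j']) : j = j' := by
  have := congr_fun (congr_fun h 0) 0
  simp only [aMap_iterate, Function.update_self, Pi.zero_apply, zero_add] at this
  rw [← ZMod.val_natCast_of_lt hj, this, ZMod.val_natCast_of_lt hj']

theorem aMap_iterate_ne_bMap {j : ℕ} (h1 : 1 ≤ j) (h2 : j < d) (b : Fin m → ZMod d) :
    (aMap d)^[j] ≠ bMap d m ω b := by
  intro h
  have := congr_fun (congr_fun h 0) 0
  simp only [aMap_iterate, bMap_apply_zero, Function.update_self, Pi.zero_apply,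
    zero_add] at this
  exact natCast_ne_zero_of_lt h1 h2 this

variable [Fact (1 < d)]

theorem bMap_of_spineAt (b : Fin m → ZMod d) (h : SpineAt u r) :
    bMap d m ω b u = Function.update u (r + 1) (u (r + 1) + ω r b) := by
  funext n
  simp only [bMap, ZMod.natCast_self, zero_sub]
  rcases eq_or_ne n (r + 1) with rfl | hn
  · rw [if_pos ⟨r.succ_ne_zero, h⟩, Function.update_self, Nat.add_sub_cancel]
  · rw [Function.update_of_ne hn, if_neg]
    rintro ⟨hn0, hs⟩
    exact hn (by have := h.unique hs; omega)

theorem bMap_injective (hω : InOmega d m ω) : Function.Injective fun b => bMap d m ω b := by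
  intro b b' h
  have hr : ∀ r, ω r (b - b') = 0 := fun r => by
    have := congr_fun (congr_fun h (withSpinePrefix r 0)) (r + 1)
    simp only [bMap_of_spineAt _ spineAt_withSpinePrefix, Function.update_self] at this
    rw [map_sub, sub_eq_zero]
    exact add_left_cancel this
  exact sub_eq_zero.1 (hω.2 0 _ fun j _ => hr j)

theorem mult_eq_card_add_card (hω : InOmega d m ω) (u v : Bd d) :
    mult d m ω u v = Nat.card {j : ℕ // (1 ≤ j ∧ j ≤ d - 1) ∧ (aMap d)^[j] u = v} +
      Nat.card {b : Fin m → ZMod d // b ≠ 0 ∧ bMap d m ω b u = v} := by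
  have hd : 1 < d := Fact.out
  have : Finite {j : ℕ // (1 ≤ j ∧ j ≤ d - 1) ∧ (aMap d)^[j] u = v} :=
    Finite.of_injective (fun j => (⟨j.1, by have := j.2.1.2; omega⟩ : Fin d)) fun j j' h =>
      Subtype.ext (Fin.mk.inj_iff.1 h)
  let e : {j : ℕ // (1 ≤ j ∧ j ≤ d - 1) ∧ (aMap d)^[j] u = v} ⊕
      {b : Fin m → ZMod d // b ≠ 0 ∧ bMap d m ω b u = v} →
      {f : Bd d → Bd d // f ∈ genSet d m ω ∧ f u = v} :=
    Sum.elim (fun j => ⟨_, Or.inl ⟨j.1, j.2.1.1, j.2.1.2, rfl⟩, j.2.2⟩)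
      (fun b => ⟨_, Or.inr ⟨b.1, b.2.1, rfl⟩, b.2.2⟩)
  have he : Function.Bijective e := by
    refine ⟨?_, ?_⟩
    · rintro (⟨j, hj, _⟩ | ⟨b, _, _⟩) (⟨j', hj', _⟩ | ⟨b', _, _⟩) h <;>
        simp only [e, Sum.elim_inl, Sum.elim_inr, Subtype.mk.injEq] at h
      · exact congrArg Sum.inl
          (Subtype.ext (aMap_iterate_inj (j := j) (j' := j') (by omega) (by omega) h))
      · exact absurd h (aMap_iterate_ne_bMap hj.1 (by omega) b')
      · exact absurd h.symm (aMap_iterate_ne_bMap hj'.1 (by omega) b)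
      · exact congrArg Sum.inr (Subtype.ext (bMap_injective hω h))
    · rintro ⟨f, ⟨j, hj1, hj2, rfl⟩ | ⟨b, hb, rfl⟩, hf⟩
      · exact ⟨Sum.inl ⟨j, ⟨hj1, hj2⟩, hf⟩, rfl⟩
      · exact ⟨Sum.inr ⟨b, hb, hf⟩, rfl⟩
  rw [mult, ← Nat.card_congr (Equiv.ofBijective e he), Nat.card_sum]

open Classical in
theorem card_aMap_iterate_eq (u v : Bd d) :
    Nat.card {j : ℕ // (1 ≤ j ∧ j ≤ d - 1) ∧ (aMap d)^[j] u = v} = if AEdge u v then 1 else 0 := by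
  have hd : 1 < d := Fact.out
  simp only [aMap_iterate, Function.update_eq_iff]
  split_ifs with h
  · have hval : (v 0 - u 0).val ≠ 0 := (ZMod.val_eq_zero _).not.2 (sub_ne_zero.2 h.1.symm)
    refine Nat.card_eq_one_iff_exists.2
      ⟨⟨(v 0 - u 0).val, ⟨Nat.one_le_iff_ne_zero.2 hval, ?_⟩, ?_, h.2⟩, ?_⟩
    · have := ZMod.val_lt (v 0 - u 0); omega
    · rw [ZMod.natCast_zmod_val]; ring
    · rintro ⟨j, ⟨hj1, hj2⟩, hj, -⟩
      refine Subtype.ext ?_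
      change j = (v 0 - u 0).val
      rw [← hj, add_sub_cancel_left, ZMod.val_natCast_of_lt (show j < d by omega)]
  · refine Nat.card_eq_zero.2 (Or.inl ⟨fun ⟨j, ⟨hj1, hj2⟩, hj, hoff⟩ => h ⟨fun h0 => ?_, hoff⟩⟩)
    exact natCast_ne_zero_of_lt hj1 (show j < d by omega) (by linear_combination hj - h0)

theorem mult_of_aEdge (hω : InOmega d m ω) (h : AEdge u v) : mult d m ω u v = 1 := by
  rw [mult_eq_card_add_card hω, card_aMap_iterate_eq, if_pos h, add_eq_left, Nat.card_eq_zero]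
  exact Or.inl ⟨fun ⟨b, _, hb⟩ => h.1 (by rw [← hb, bMap_apply_zero])⟩

theorem mult_of_bEdgeAt (hω : InOmega d m ω) (h : BEdgeAt u v r) :
    mult d m ω u v = Nat.card (ω r).ker := by
  obtain ⟨b₀, hb₀⟩ := hω.1 r (v (r + 1) - u (r + 1))
  have hne : v (r + 1) - u (r + 1) ≠ 0 := sub_ne_zero.2 h.2.1.symm
  rw [mult_eq_card_add_card hω, card_aMap_iterate_eq,
    if_neg fun ha => h.2.1 (ha.2 _ r.succ_ne_zero), zero_add, ← card_fiber_eq_card_ker _ b₀]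
  refine Nat.card_congr (Equiv.subtypeEquivRight fun b => ?_)
  rw [bMap_of_spineAt b h.1, Function.update_eq_iff, hb₀]
  refine ⟨fun ⟨_, hb, _⟩ => by linear_combination hb, fun hb => ⟨?_, ?_, h.2.2⟩⟩
  · rintro rfl
    exact hne (by rw [← hb, map_zero])
  · linear_combination hb

theorem mult_self_of_spineAt (hω : InOmega d m ω) (h : SpineAt u r) :
    mult d m ω u u + 1 = Nat.card (ω r).ker := by
  rw [mult_eq_card_add_card hω, card_aMap_iterate_eq, if_neg fun ha => ha.1 rfl, zero_add,
    ← card_subtype_ne_and_add_one (P := (· ∈ (ω r).ker)) (zero_mem _)]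
  congr 1
  refine Nat.card_congr (Equiv.subtypeEquivRight fun b => ?_)
  rw [bMap_of_spineAt b h, Function.update_eq_self_iff, add_eq_left, AddMonoidHom.mem_ker]

theorem mult_self_of_not_spine (hω : InOmega d m ω) (h : ¬ Spine u) :
    mult d m ω u u + 1 = Nat.card (Fin m → ZMod d) := by
  rw [mult_eq_card_add_card hω, card_aMap_iterate_eq, if_neg fun ha => ha.1 rfl, zero_add]
  calc _ = Nat.card {b : Fin m → ZMod d // b ≠ 0 ∧ True} + 1 := by
        simp only [bMap_of_not_spine _ h]
    _ = Nat.card {b : Fin m → ZMod d // True} := card_subtype_ne_and_add_one trivial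
    _ = _ := Nat.card_congr (Equiv.subtypeUnivEquiv fun _ => trivial)

theorem mult_eq_zero (hω : InOmega d m ω) (huv : u ≠ v) (ha : ¬ AEdge u v) (hb : ¬ BEdge u v) :
    mult d m ω u v = 0 := by
  rw [mult_eq_card_add_card hω, card_aMap_iterate_eq, if_neg ha, zero_add, Nat.card_eq_zero]
  refine Or.inl ⟨fun ⟨b, _, hbu⟩ => ?_⟩
  by_cases hs : Spine u
  · obtain ⟨r, hr⟩ := hs
    rw [bMap_of_spineAt b hr, Function.update_eq_iff] at hbu
    refine hb ⟨r, hr, fun h => huv (funext fun n => ?_), hbu.2⟩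
    rcases eq_or_ne n (r + 1) with rfl | hn
    exacts [h, hbu.2 n hn]
  · exact huv (by rwa [bMap_of_not_spine b hs] at hbu)

theorem mult_pos_iff (hω : InOmega d m ω) (huv : u ≠ v) :
    0 < mult d m ω u v ↔ AEdge u v ∨ BEdge u v := by
  refine ⟨fun h => ?_, ?_⟩
  · by_contra hc
    rw [not_or] at hc
    exact h.ne' (mult_eq_zero hω huv hc.1 hc.2)
  · rintro (ha | ⟨r, hb⟩)
    · rw [mult_of_aEdge hω ha]; exact one_pos
    · rw [mult_of_bEdgeAt hω hb]; exact Nat.card_pos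

theorem mult_eq_zero_of_not_cofinal (hω : InOmega d m ω) (h : ¬ Cofinal u v) :
    mult d m ω u v = 0 := by
  by_contra h0
  have huv : u ≠ v := fun e => h (e ▸ self_mem_Cof u)
  rcases (mult_pos_iff hω huv).1 (Nat.pos_of_ne_zero h0) with ha | ⟨r, hb⟩
  exacts [h ha.agreeFrom.cofinal, h hb.agreeFrom.cofinal]

theorem mult_eq_mult_of_iff (hω : InOmega d m ω) {u' v' : Bd d} (heq : u' = v' ↔ u = v)
    (hs : ∀ r, SpineAt u' r ↔ SpineAt u r) (ha : AEdge u' v' ↔ AEdge u v)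
    (hb : ∀ r, BEdgeAt u' v' r ↔ BEdgeAt u v r) : mult d m ω u' v' = mult d m ω u v := by
  by_cases huv : u = v
  · obtain rfl := huv
    obtain rfl := heq.2 rfl
    by_cases hsp : Spine u
    · obtain ⟨r, hr⟩ := hsp
      have := mult_self_of_spineAt hω hr
      have := mult_self_of_spineAt hω ((hs r).2 hr)
      omega
    · have := mult_self_of_not_spine hω hsp
      have := mult_self_of_not_spine hω fun ⟨r, hr⟩ => hsp ⟨r, (hs r).1 hr⟩
      omega
  have huv' : u' ≠ v' := heq.not.2 huv
  by_cases hae : AEdge u v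
  · rw [mult_of_aEdge hω hae, mult_of_aEdge hω (ha.2 hae)]
  by_cases hbe : BEdge u v
  · obtain ⟨r, hr⟩ := hbe
    rw [mult_of_bEdgeAt hω hr, mult_of_bEdgeAt hω ((hb r).2 hr)]
  rw [mult_eq_zero hω huv hae hbe,
    mult_eq_zero hω huv' (ha.not.2 hae) fun ⟨r, hr⟩ => hbe ⟨r, (hb r).1 hr⟩]

theorem spine_iff_mult_self_lt (hω : InOmega d m ω) :
    Spine u ↔ mult d m ω u u + 1 < Nat.card (Fin m → ZMod d) := by
  refine ⟨fun ⟨r, hr⟩ => ?_, fun h => ?_⟩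
  · obtain ⟨b₁, hb₁⟩ := hω.1 r 1
    rw [mult_self_of_spineAt hω hr]
    exact Finite.card_subtype_lt (p := (· ∈ (ω r).ker)) (x := b₁) (by simp [hb₁])
  · by_contra hs
    rw [mult_self_of_not_spine hω hs] at h
    exact lt_irrefl _ h

theorem aEdge_iff_adj_not_bEdge (hω : InOmega d m ω) :
    AEdge u v ↔ u ≠ v ∧ 0 < mult d m ω u v ∧ ¬ BEdge u v := by
  refine ⟨fun h => ?_, fun ⟨huv, hpos, hb⟩ => ((mult_pos_iff hω huv).1 hpos).resolve_right hb⟩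
  exact ⟨h.ne, (mult_pos_iff hω h.ne).2 (Or.inl h),
    fun ⟨r, hr⟩ => hr.2.1 (h.2 _ r.succ_ne_zero)⟩

theorem SpineAt.apply_zero_ne_one [Fact (2 < d)] (h : SpineAt u r) : u 0 ≠ 1 := by
  rcases r.eq_zero_or_pos with rfl | hr
  · rw [h.2]; exact zero_ne_one
  · rw [h.1 0 hr]; exact ZMod.neg_one_ne_one

/-- An `a`-edge between two spines fails the condition on the right: resetting the first letter
to `1` gives a common neighbour that is not a spine. -/
theorem bEdge_iff_adj_spine [Fact (2 < d)] (hω : InOmega d m ω) :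
    BEdge u v ↔ u ≠ v ∧ 0 < mult d m ω u v ∧ Spine u ∧ Spine v ∧
      ∀ w, w ≠ u → w ≠ v → 0 < mult d m ω u w → 0 < mult d m ω v w → Spine w := by
  constructor
  · rintro ⟨r, hr⟩
    refine ⟨hr.ne, (mult_pos_iff hω hr.ne).2 (Or.inr ⟨r, hr⟩), ⟨r, hr.1⟩, ⟨r, hr.spineAt_right⟩,
      fun w hwu hwv huw hvw => ?_⟩
    rcases (mult_pos_iff hω hwu.symm).1 huw with ha | ⟨s, hs⟩
    · exfalso
      rcases (mult_pos_iff hω hwv.symm).1 hvw with ha' | ⟨s', hs'⟩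
      · exact hr.2.1 ((ha.2 _ r.succ_ne_zero).trans (ha'.2 _ r.succ_ne_zero).symm)
      · exact ha.1 ((hr.2.2 0 (by omega)).trans (hs'.2.2 0 (by omega)))
    · exact ⟨s, hs.spineAt_right⟩
  · rintro ⟨huv, hpos, ⟨r, hr⟩, ⟨s, hs⟩, hall⟩
    refine ((mult_pos_iff hω huv).1 hpos).resolve_left fun ha => ?_
    have hw0 : Function.update u 0 1 0 = 1 := Function.update_self _ _ _
    have hwu : AEdge u (Function.update u 0 1) :=
      ⟨hw0 ▸ hr.apply_zero_ne_one, fun n hn => (Function.update_of_ne hn _ _).symm⟩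
    have hwv : AEdge v (Function.update u 0 1) :=
      ⟨hw0 ▸ hs.apply_zero_ne_one, fun n hn => (ha.2 n hn).symm.trans (hwu.2 n hn)⟩
    obtain ⟨k, hk⟩ := hall _ hwu.ne.symm hwv.ne.symm ((mult_pos_iff hω hwu.ne).2 (Or.inl hwu))
      ((mult_pos_iff hω hwv.ne).2 (Or.inl hwv))
    exact hk.apply_zero_ne_one hw0

end Multiplicities

section Automorphisms

def IsMultAut (ω : ℕ → ((Fin m → ZMod d) →+ ZMod d)) (Φ : Equiv.Perm (Bd d)) : Prop :=
  ∀ u v, mult d m ω (Φ u) (Φ v) = mult d m ω u v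

namespace IsMultAut

variable {Φ : Equiv.Perm (Bd d)}

theorem spine_iff [Fact (1 < d)] (hω : InOmega d m ω) (hΦ : IsMultAut ω Φ) (u : Bd d) :
    Spine (Φ u) ↔ Spine u := by
  rw [spine_iff_mult_self_lt hω, spine_iff_mult_self_lt hω, hΦ]

variable [Fact (2 < d)]

theorem bEdge_iff (hω : InOmega d m ω) (hΦ : IsMultAut ω Φ) (u v : Bd d) :
    BEdge (Φ u) (Φ v) ↔ BEdge u v := by
  rw [bEdge_iff_adj_spine hω, bEdge_iff_adj_spine hω, Φ.injective.ne_iff, hΦ,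
    hΦ.spine_iff hω, hΦ.spine_iff hω]
  refine and_congr_right' <| and_congr_right' <| and_congr_right' <| and_congr_right'
    (Φ.forall_congr fun w => ?_).symm
  rw [Φ.injective.ne_iff, Φ.injective.ne_iff, hΦ, hΦ, hΦ.spine_iff hω]

theorem aEdge_iff (hω : InOmega d m ω) (hΦ : IsMultAut ω Φ) (u v : Bd d) :
    AEdge (Φ u) (Φ v) ↔ AEdge u v := by
  rw [aEdge_iff_adj_not_bEdge hω, aEdge_iff_adj_not_bEdge hω, Φ.injective.ne_iff, hΦ,
    hΦ.bEdge_iff hω]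

theorem spineAtLeast_iff_of_agreeFrom (hω : InOmega d m ω) (hΦ : IsMultAut ω Φ)
    (hagree : ∀ u v, AgreeFrom (p + 1) (Φ u) (Φ v) ↔ AgreeFrom (p + 1) u v) (u : Bd d) :
    SpineAtLeast p (Φ u) ↔ SpineAtLeast p u := by
  rw [SpinalGraph.spineAtLeast_iff, SpinalGraph.spineAtLeast_iff]
  exact (Φ.exists_congr fun v => by rw [hΦ.bEdge_iff hω, hagree]).symm

theorem spineAt_iff_of_agreeFrom (hω : InOmega d m ω) (hΦ : IsMultAut ω Φ)
    (hagree : ∀ u v, AgreeFrom (p + 1) (Φ u) (Φ v) ↔ AgreeFrom (p + 1) u v) (u : Bd d) :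
    SpineAt (Φ u) p ↔ SpineAt u p := by
  rw [SpinalGraph.spineAt_iff, SpinalGraph.spineAt_iff,
    hΦ.spineAtLeast_iff_of_agreeFrom hω hagree]
  refine and_congr_right'
    (Φ.exists_congr fun w => and_congr ?_ (Φ.forall_congr fun w₁ => ?_)).symm
  · rw [Φ.apply_eq_iff_eq, hΦ.bEdge_iff hω]
  · rw [hagree, hΦ.spineAtLeast_iff_of_agreeFrom hω hagree, Φ.apply_eq_iff_eq]

theorem agreeFrom_succ_iff (hω : InOmega d m ω) (hΦ : IsMultAut ω Φ) (p : ℕ) (u v : Bd d) :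
    AgreeFrom (p + 1) (Φ u) (Φ v) ↔ AgreeFrom (p + 1) u v := by
  induction p generalizing u v with
  | zero => rw [zero_add, agreeFrom_one_iff, agreeFrom_one_iff, Φ.apply_eq_iff_eq,
      hΦ.aEdge_iff hω]
  | succ p ih =>
    have hb : ∀ u v, BEdgeAt (Φ u) (Φ v) p ↔ BEdgeAt u v p := fun u v => by
      rw [bEdgeAt_iff_bEdge_and_spineAt, bEdgeAt_iff_bEdge_and_spineAt, hΦ.bEdge_iff hω,
        hΦ.spineAt_iff_of_agreeFrom hω ih]
    change AgreeFrom (p + 2) _ _ ↔ AgreeFrom (p + 2) _ _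
    rw [agreeFrom_add_two_iff, agreeFrom_add_two_iff]
    refine (Φ.exists_congr fun u' => Φ.exists_congr fun v' => ?_).symm
    rw [ih, ih, hb, Φ.apply_eq_iff_eq]

theorem agreeFrom_iff (hω : InOmega d m ω) (hΦ : IsMultAut ω Φ) (p : ℕ) (u v : Bd d) :
    AgreeFrom p (Φ u) (Φ v) ↔ AgreeFrom p u v := by
  cases p with
  | zero => rw [agreeFrom_zero_iff, agreeFrom_zero_iff, Φ.apply_eq_iff_eq]
  | succ p => exact hΦ.agreeFrom_succ_iff hω p u v

theorem spineAt_iff (hω : InOmega d m ω) (hΦ : IsMultAut ω Φ) (p : ℕ) (u : Bd d) :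
    SpineAt (Φ u) p ↔ SpineAt u p :=
  hΦ.spineAt_iff_of_agreeFrom hω (hΦ.agreeFrom_succ_iff hω p) u

theorem compatible (hω : InOmega d m ω) (hΦ : IsMultAut ω Φ) (u : Bd d) :
    Compatible d u (Φ u) := by
  have key : ∀ p r, r ≤ p → (u p = 0 ∧ EndsIn d u p r ↔ Φ u p = 0 ∧ EndsIn d (Φ u) p r) :=
    fun p r hr => by
      rw [zero_and_endsIn_iff hr, zero_and_endsIn_iff hr]
      exact Φ.exists_congr fun v => by rw [hΦ.agreeFrom_iff hω, hΦ.spineAt_iff hω]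
  have hzero : ∀ n, u n = 0 ↔ Φ u n = 0 := fun n => by
    simpa only [endsIn_zero, and_true] using key n 0 n.zero_le
  refine ⟨hzero, fun p hp r => ?_⟩
  by_cases hr : r ≤ p
  · simpa only [hp, (hzero p).1 hp, true_and] using key p r hr
  · exact iff_of_false (fun h => hr h.1) (fun h => hr h.1)

end IsMultAut

variable [Fact (1 < d)]

theorem isMultAut_subtypeCongr (hω : InOmega d m ω) {U : Set (Bd d)} [DecidablePred (· ∈ U)]
    (hU : ∀ x y, x ∈ U → Cofinal x y → y ∈ U) (e : Equiv.Perm U)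
    (he : ∀ a b : U, mult d m ω (e a) (e b) = mult d m ω a b) :
    IsMultAut ω (e.subtypeCongr (Equiv.refl {x // x ∉ U})) := by
  have h0 : ∀ {x y}, x ∈ U → y ∉ U → mult d m ω x y = 0 ∧ mult d m ω y x = 0 := fun hx hy =>
    ⟨mult_eq_zero_of_not_cofinal hω fun h => hy (hU _ _ hx h),
      mult_eq_zero_of_not_cofinal hω fun h => hy (hU _ _ hx h.symm)⟩
  intro u v
  by_cases hu : u ∈ U <;> by_cases hv : v ∈ U <;>
    simp only [Equiv.Perm.subtypeCongr.left_apply, Equiv.Perm.subtypeCongr.right_apply,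
      Equiv.refl_apply, hu, hv, not_false_eq_true]
  · exact he _ _
  · rw [(h0 (e ⟨u, hu⟩).2 hv).1, (h0 hu hv).1]
  · rw [(h0 (e ⟨v, hv⟩).2 hu).2, (h0 hv hu).2]

/-- `Φ` is the identity off `Cof ξ ∪ Cof η`, and `φ⁻¹` on `Cof η` when the two classes are
disjoint. -/
theorem exists_isMultAut_extend (hω : InOmega d m ω) {ξ η : Bd d} (φ : ↥(Cof ξ) ≃ ↥(Cof η))
    (hφ : ∀ u v : ↥(Cof ξ), mult d m ω u v = mult d m ω (φ u) (φ v)) :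
    ∃ Φ : Equiv.Perm (Bd d), IsMultAut ω Φ ∧ Φ ξ = φ ⟨ξ, self_mem_Cof ξ⟩ := by
  classical
  by_cases hξη : Cofinal ξ η
  · have hst : Cof η = Cof ξ := Set.ext fun x => ⟨hξη.trans, hξη.symm.trans⟩
    exact ⟨_, isMultAut_subtypeCongr hω (U := Cof ξ) (fun _ _ hx hxy => Cofinal.trans hx hxy)
      (φ.trans (Equiv.setCongr hst)) (fun a b => (hφ a b).symm),
      Equiv.Perm.subtypeCongr.left_apply _ _ (self_mem_Cof ξ)⟩
  have hdisj : Disjoint (Cof ξ) (Cof η) :=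
    Set.disjoint_left.2 fun x hx hy => hξη (Cofinal.trans hx (Cofinal.symm hy))
  have hzero : ∀ x y, x ∈ Cof ξ → y ∈ Cof η → mult d m ω x y = 0 ∧ mult d m ω y x = 0 :=
    fun x y hx hy =>
      have hxy : ¬ Cofinal x y := fun h => hξη ((Cofinal.trans hx h).trans (Cofinal.symm hy))
      ⟨mult_eq_zero_of_not_cofinal hω hxy, mult_eq_zero_of_not_cofinal hω (hxy ∘ Cofinal.symm)⟩
  let e : Equiv.Perm ↥(Cof ξ ∪ Cof η) := (Equiv.Set.union hdisj).trans
    ((φ.sumCongr φ.symm).trans ((Equiv.sumComm _ _).trans (Equiv.Set.union hdisj).symm))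
  have he_l : ∀ x (hx : x ∈ Cof ξ), (e ⟨x, Or.inl hx⟩ : Bd d) = φ ⟨x, hx⟩ := fun x hx => by
    simp [e, Equiv.Set.union_apply_left hdisj (a := ⟨x, Or.inl hx⟩) hx]
  have he_r : ∀ x (hx : x ∈ Cof η), (e ⟨x, Or.inr hx⟩ : Bd d) = φ.symm ⟨x, hx⟩ := fun x hx => by
    simp [e, Equiv.Set.union_apply_right hdisj (a := ⟨x, Or.inr hx⟩) hx]
  refine ⟨_, isMultAut_subtypeCongr hω ?_ e ?_, ?_⟩
  · rintro x y (hx | hx) hxy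
    exacts [Or.inl (Cofinal.trans hx hxy), Or.inr (Cofinal.trans hx hxy)]
  · rintro ⟨a, ha | ha⟩ ⟨b, hb | hb⟩
    · rw [he_l _ ha, he_l _ hb]; exact (hφ _ _).symm
    · rw [he_l _ ha, he_r _ hb, (hzero _ _ ha hb).1,
        (hzero _ _ (φ.symm ⟨b, hb⟩).2 (φ ⟨a, ha⟩).2).2]
    · rw [he_r _ ha, he_l _ hb, (hzero _ _ hb ha).2,
        (hzero _ _ (φ.symm ⟨a, ha⟩).2 (φ ⟨b, hb⟩).2).1]
    · rw [he_r _ ha, he_r _ hb, hφ, Equiv.apply_symm_apply, Equiv.apply_symm_apply]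
  · exact (Equiv.Perm.subtypeCongr.left_apply e _ (Or.inl (self_mem_Cof ξ))).trans
      (he_l ξ (self_mem_Cof ξ))

end Automorphisms

section Recoding

theorem swap_apply_eq_self {α : Type*} [DecidableEq α] {a b c : α} (h : a = c ↔ b = c) :
    Equiv.swap a b c = c := by
  by_cases hac : a = c
  · rw [hac, h.1 hac, Equiv.swap_self, Equiv.refl_apply]
  · exact Equiv.swap_apply_of_ne_of_ne (Ne.symm hac) (Ne.symm (mt h.2 hac))

def SpineAfter (u : Bd d) (n : ℕ) : Prop :=
  ∃ p, n < p ∧ u p = 0 ∧ ∀ i, n < i → i < p → u i = -1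

theorem spineAfter_congr (h : ∀ k, n < k → u k = v k) : SpineAfter u n ↔ SpineAfter v n :=
  exists_congr fun p => and_congr_right fun hnp => and_congr (by rw [h p hnp])
    (forall_congr' fun i => imp_congr_right fun hi => by rw [h i hi])

structure Recoding (d : ℕ) where
  σ : ℕ → Equiv.Perm (ZMod d)
  τ : ℕ → Equiv.Perm (ZMod d)
  σ_zero : ∀ n, σ n 0 = 0
  σ_neg_one : ∀ n, σ n (-1) = -1
  τ_zero : ∀ n, τ n 0 = 0

namespace Recoding

variable (R : Recoding d)

open Classical in
def recode (u : Bd d) : Bd d := fun n => if SpineAfter u n then R.σ n (u n) else R.τ n (u n)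

def symm : Recoding d where
  σ n := (R.σ n).symm
  τ n := (R.τ n).symm
  σ_zero n := (Equiv.symm_apply_eq _).2 (R.σ_zero n).symm
  σ_neg_one n := (Equiv.symm_apply_eq _).2 (R.σ_neg_one n).symm
  τ_zero n := (Equiv.symm_apply_eq _).2 (R.τ_zero n).symm

theorem recode_of_spineAfter (h : SpineAfter u n) : R.recode u n = R.σ n (u n) := if_pos h

theorem recode_of_not_spineAfter (h : ¬ SpineAfter u n) : R.recode u n = R.τ n (u n) :=
  if_neg h

theorem recode_eq_zero_iff : R.recode u n = 0 ↔ u n = 0 := by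
  by_cases h : SpineAfter u n
  · rw [R.recode_of_spineAfter h, (R.σ n).injective.eq_iff' (R.σ_zero n)]
  · rw [R.recode_of_not_spineAfter h, (R.τ n).injective.eq_iff' (R.τ_zero n)]

theorem spineAfter_recode_iff : SpineAfter (R.recode u) n ↔ SpineAfter u n := by
  refine ⟨fun ⟨p, hnp, hp, hneg⟩ => ⟨p, hnp, R.recode_eq_zero_iff.1 hp, ?_⟩,
    fun ⟨p, hnp, hp, hneg⟩ => ⟨p, hnp, R.recode_eq_zero_iff.2 hp, fun i hni hip => ?_⟩⟩
  · suffices ∀ k i, n < i → i < p → p - i ≤ k → u i = -1 from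
      fun i hni hip => this _ i hni hip le_rfl
    intro k
    induction k with
    | zero => intro i _ hip hk; omega
    | succ k ih =>
      intro i hni hip hk
      have hs : SpineAfter u i := ⟨p, hip, R.recode_eq_zero_iff.1 hp,
        fun j hij hjp => ih j (by omega) hjp (by omega)⟩
      have := hneg i hni hip
      rwa [R.recode_of_spineAfter hs, (R.σ i).injective.eq_iff' (R.σ_neg_one i)] at this
  · rw [R.recode_of_spineAfter ⟨p, hip, hp, fun j hij hjp => hneg j (by omega) hjp⟩,
      hneg i hni hip, R.σ_neg_one]

@[simp]
theorem symm_recode_recode (u : Bd d) : R.symm.recode (R.recode u) = u := by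
  funext n
  by_cases h : SpineAfter u n
  · rw [R.symm.recode_of_spineAfter (R.spineAfter_recode_iff.2 h), R.recode_of_spineAfter h]
    exact (R.σ n).symm_apply_apply _
  · rw [R.symm.recode_of_not_spineAfter (mt R.spineAfter_recode_iff.1 h),
      R.recode_of_not_spineAfter h]
    exact (R.τ n).symm_apply_apply _

def toPerm : Equiv.Perm (Bd d) :=
  ⟨R.recode, R.symm.recode, R.symm_recode_recode, R.symm.symm_recode_recode⟩

theorem spineAt_recode (h : SpineAt u r) : SpineAt (R.recode u) r :=
  ⟨fun i hi => by
    rw [R.recode_of_spineAfter ⟨r, hi, h.2, fun j _ hj => h.1 j hj⟩, h.1 i hi, R.σ_neg_one],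
    R.recode_eq_zero_iff.2 h.2⟩

theorem spineAt_recode_iff : SpineAt (R.recode u) r ↔ SpineAt u r :=
  ⟨fun h => R.symm_recode_recode u ▸ R.symm.spineAt_recode h, R.spineAt_recode⟩

theorem recode_apply_eq_iff (h : ∀ k, n < k → u k = v k) :
    R.recode u n = R.recode v n ↔ u n = v n := by
  by_cases hs : SpineAfter u n
  · rw [R.recode_of_spineAfter hs, R.recode_of_spineAfter ((spineAfter_congr h).1 hs),
      (R.σ n).apply_eq_iff_eq]
  · rw [R.recode_of_not_spineAfter hs,
      R.recode_of_not_spineAfter (mt (spineAfter_congr h).2 hs), (R.τ n).apply_eq_iff_eq]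

theorem agreeFrom_recode (h : AgreeFrom p u v) : AgreeFrom p (R.recode u) (R.recode v) :=
  fun n hn => (R.recode_apply_eq_iff fun k hk => h k (by omega)).2 (h n hn)

theorem cofinal_recode_iff : Cofinal (R.recode u) (R.recode v) ↔ Cofinal u v :=
  ⟨fun ⟨_, h⟩ => by simpa using (R.symm.agreeFrom_recode h).cofinal,
    fun ⟨_, h⟩ => (R.agreeFrom_recode h).cofinal⟩

theorem aEdge_recode (h : AEdge u v) : AEdge (R.recode u) (R.recode v) :=
  ⟨(R.recode_apply_eq_iff fun k hk => h.2 k hk.ne').not.2 h.1,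
    fun n hn => R.agreeFrom_recode h.agreeFrom n (Nat.one_le_iff_ne_zero.2 hn)⟩

theorem bEdgeAt_recode (h : BEdgeAt u v r) : BEdgeAt (R.recode u) (R.recode v) r := by
  have hu := R.spineAt_recode h.1
  refine ⟨hu, (R.recode_apply_eq_iff fun k hk => h.2.2 k hk.ne').not.2 h.2.1, fun n hn => ?_⟩
  rcases le_or_gt n r with hnr | hnr
  · exact hu.eq_of_le (R.spineAt_recode h.spineAt_right) hnr
  · exact R.agreeFrom_recode h.agreeFrom n (by omega)

theorem mult_recode [Fact (1 < d)] (hω : InOmega d m ω) (u v : Bd d) :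
    mult d m ω (R.recode u) (R.recode v) = mult d m ω u v :=
  mult_eq_mult_of_iff hω R.toPerm.injective.eq_iff (fun _ => R.spineAt_recode_iff)
    ⟨fun h => by simpa using R.symm.aEdge_recode h, R.aEdge_recode⟩
    fun _ => ⟨fun h => by simpa using R.symm.bEdgeAt_recode h, R.bEdgeAt_recode⟩

end Recoding

theorem neg_one_iff_of_compatible {ξ η : Bd d} (hc : Compatible d ξ η) (hs : SpineAfter ξ n) :
    ξ n = -1 ↔ η n = -1 := by
  obtain ⟨p, hnp, hp, hneg⟩ := hs
  have hξ : EndsIn d ξ p (p - (n + 1)) :=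
    ⟨Nat.sub_le _ _, fun i hi hip => by simpa using hneg i (by omega) hip⟩
  have hη := (hc.2 p hp _).1 hξ
  have := hc.2 p hp (p - n)
  rw [endsIn_sub_iff hnp, endsIn_sub_iff hnp] at this
  simpa only [hξ, hη, and_true] using this

namespace Recoding

open Classical in
/-- `σ n` acts on `ξ` only if `ξ` has a block `(d-1)^k 0` after position `n`, and then the swap
fixes `d-1` by compatibility. -/
def ofCompatible {ξ η : Bd d} (hc : Compatible d ξ η) : Recoding d where
  σ n := if SpineAfter ξ n then Equiv.swap (ξ n) (η n) else 1
  τ n := Equiv.swap (ξ n) (η n)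
  σ_zero n := by
    split_ifs
    exacts [swap_apply_eq_self (hc.1 n), rfl]
  σ_neg_one n := by
    split_ifs with h
    exacts [swap_apply_eq_self (neg_one_iff_of_compatible hc h), rfl]
  τ_zero n := swap_apply_eq_self (hc.1 n)

theorem recode_ofCompatible {ξ η : Bd d} (hc : Compatible d ξ η) :
    (ofCompatible hc).recode ξ = η := by
  funext n
  by_cases h : SpineAfter ξ n
  · rw [recode_of_spineAfter _ h]
    simp [ofCompatible, h]
  · rw [recode_of_not_spineAfter _ h]
    exact Equiv.swap_apply_left _ _

end Recoding

theorem exists_multIso_of_compatible [Fact (1 < d)] (hω : InOmega d m ω) {ξ η η' : Bd d}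
    (hη' : η' ∈ Cof η) (hc : Compatible d ξ η') :
    ∃ φ : ↥(Cof ξ) ≃ ↥(Cof η), ∀ u v : ↥(Cof ξ), mult d m ω u v = mult d m ω (φ u) (φ v) := by
  let R := Recoding.ofCompatible hc
  have hmem : ∀ x, x ∈ Cof ξ ↔ R.toPerm x ∈ Cof η := fun x => by
    change Cofinal ξ x ↔ Cofinal η (R.recode x)
    rw [← R.cofinal_recode_iff, Recoding.recode_ofCompatible]
    exact ⟨Cofinal.trans hη', Cofinal.trans (Cofinal.symm hη')⟩
  exact ⟨R.toPerm.subtypeEquiv hmem, fun u v => (R.mult_recode hω u v).symm⟩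

end Recoding

end SpinalGraph

theorem unrooted_iso_iff_compatible_general (d m : ℕ) (hd : 3 ≤ d)
    (ω : ℕ → ((Fin m → ZMod d) →+ ZMod d)) (hω : InOmega d m ω) (ξ η : Bd d) :
    (∃ φ : ↥(Cof ξ) ≃ ↥(Cof η),
        ∀ u v : ↥(Cof ξ), mult d m ω ↑u ↑v = mult d m ω ↑(φ u) ↑(φ v)) ↔
      ∃ η' ∈ Cof η, Compatible d ξ η' := by
  have : Fact (2 < d) := ⟨hd⟩
  constructor
  · rintro ⟨φ, hφ⟩
    obtain ⟨Φ, hΦ, hΦξ⟩ := SpinalGraph.exists_isMultAut_extend hω φ hφ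
    exact ⟨Φ ξ, hΦξ ▸ (φ _).2, hΦ.compatible hω ξ⟩
  · rintro ⟨η', hη', hc⟩
    exact SpinalGraph.exists_multIso_of_compatible hω hη' hc

/-- `Γ_ξ` and `Γ_η` are isomorphic as unrooted, undirected, unlabeled
graphs (a multiplicity-preserving bijection `Cof(ξ) → Cof(η)`, with no condition on
roots) iff there exists `η' ∈ Cof(η)` with `ξ ∼ η'`. -/
theorem unrooted_iso_iff_compatible (d m : ℕ) (hd : 3 ≤ d) (hm : 1 ≤ m)
    (ω : ℕ → ((Fin m → ZMod d) →+ ZMod d)) (hω : InOmega d m ω) (ξ η : Bd d) :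
    (∃ φ : ↥(Cof ξ) ≃ ↥(Cof η),
        ∀ u v : ↥(Cof ξ), mult d m ω ↑u ↑v = mult d m ω ↑(φ u) ↑(φ v)) ↔
      ∃ η' ∈ Cof η, Compatible d ξ η' :=
  unrooted_iso_iff_compatible_general d m hd ω hω ξ η

end
end

section
/- Let d ≥ 3 and let μ be the Bernoulli measure on X^ℕ. For every ξ ∈ X^ℕ, the compatibility class Comp(ξ) = {η ∈ X^ℕ : ξ ∼ η} is a μ-null set. -/
open MeasureTheory

noncomputable section

instance (d : ℕ) : MeasurableSpace (ZMod d) := ⊤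
/-- for `d ≥ 3` and the Bernoulli measure `μ` on `X^ℕ` (characterized by
giving every cylinder of length `n` the measure `(1/d)^n`), every compatibility class
`Comp(ξ) = {η : ξ ∼ η}` is a null set. -/
theorem compatibility_class_null (d : ℕ) (hd : 3 ≤ d) (μ : Measure (Bd d))
    (hμ : ∀ (n : ℕ) (w : Fin n → ZMod d),
      μ {ξ : Bd d | ∀ i : Fin n, ξ (i : ℕ) = w i} = (1 / (d : ENNReal)) ^ n)
    (ξ : Bd d) :
    μ {η : Bd d | Compatible d ξ η} = 0 := by
  classical
  haveI : NeZero d := ⟨by omega⟩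
  set x : ENNReal := ((d - 1 : ℕ) : ENNReal) / d with hxdef
  have hbound : ∀ n : ℕ, μ {η : Bd d | Compatible d ξ η} ≤ x ^ n := by
    intro n
    set A : ℕ → Finset (ZMod d) := fun i => if ξ i = 0 then {0} else {0}ᶜ with hA
    have hcardA : ∀ i, (A i).card ≤ d - 1 := by
      intro i
      by_cases h : ξ i = 0 <;>
        simp [hA, h, Finset.card_compl, ZMod.card] <;> omega
    set T : Finset (Fin n → ZMod d) := Fintype.piFinset (fun i => A (i : ℕ)) with hT
    have hsub : {η : Bd d | Compatible d ξ η} ⊆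
        ⋃ w ∈ T, {η : Bd d | ∀ i : Fin n, η (i : ℕ) = w i} := by
      intro η hη
      refine Set.mem_iUnion₂.mpr ⟨fun i : Fin n => η (i : ℕ), ?_, fun i => rfl⟩
      · simp only [hT, Fintype.mem_piFinset]
        intro i
        by_cases h : ξ (i : ℕ) = 0
        · have h2 : η (i : ℕ) = 0 := (hη.1 (i : ℕ)).1 h
          simp [hA, h, h2]
        · have h2 : η (i : ℕ) ≠ 0 := fun hh => h ((hη.1 (i : ℕ)).2 hh)
          simp [hA, h, h2]
    have hcardT : T.card ≤ (d - 1) ^ n := by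
      have : T.card = ∏ i : Fin n, (A (i : ℕ)).card := Fintype.card_piFinset _
      rw [this]
      calc ∏ i : Fin n, (A (i : ℕ)).card ≤ ∏ _i : Fin n, (d - 1) :=
            Finset.prod_le_prod' (fun i _ => hcardA (i : ℕ))
        _ = (d - 1) ^ n := by simp
    calc μ {η : Bd d | Compatible d ξ η}
        ≤ μ (⋃ w ∈ T, {η : Bd d | ∀ i : Fin n, η (i : ℕ) = w i}) := measure_mono hsub
      _ ≤ ∑ w ∈ T, μ {η : Bd d | ∀ i : Fin n, η (i : ℕ) = w i} :=
            measure_biUnion_finset_le T _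
      _ = ∑ _w ∈ T, (1 / (d : ENNReal)) ^ n :=
            Finset.sum_congr rfl (fun w _ => hμ n w)
      _ = (T.card : ENNReal) * (1 / (d : ENNReal)) ^ n := by
            rw [Finset.sum_const, nsmul_eq_mul]
      _ ≤ (((d - 1) ^ n : ℕ) : ENNReal) * (1 / (d : ENNReal)) ^ n := by
            exact mul_le_mul_left (by exact_mod_cast hcardT) _
      _ = x ^ n := by
            rw [hxdef]
            simp [div_eq_mul_inv, mul_pow]
  have hx1 : x < 1 := by
    rw [hxdef, ENNReal.div_lt_iff (Or.inl (by exact_mod_cast (by omega : d ≠ 0)))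
      (Or.inl (by simp)), one_mul]
    exact_mod_cast (by omega : d - 1 < d)
  have htends : Filter.Tendsto (fun n : ℕ => x ^ n) Filter.atTop (nhds 0) :=
    ENNReal.tendsto_pow_atTop_nhds_zero_of_lt_one hx1
  exact nonpos_iff_eq_zero.mp (ge_of_tendsto' htends hbound)

end
end

section
/- Let d ≥ 3 and let μ be the Bernoulli measure on X^ℕ. For every ξ ∈ X^ℕ, the set D = {η ∈ X^ℕ : there exists η' cofinal with η such that ξ ∼ η'} is a μ-null set. -/
open MeasureTheory

noncomputable section

/-! If `η` lies in the set, compatibility forces `η'`, and hence `η` from some position `N` on,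
to have its zeros exactly where `ξ` has them. So from position `N` on, `η` avoids one prescribed
letter at every position; under the Bernoulli measure each such position costs an independent
factor `(d - 1) / d`, so for each `N` this is a null set, and the set is a countable union of
these. -/

section UniformBernoulli

open Finset

variable {α : Type*} [Fintype α] [MeasurableSpace α] {μ : Measure (ℕ → α)}

def IsUniformBernoulli (μ : Measure (ℕ → α)) : Prop :=
  ∀ (n : ℕ) (w : Fin n → α), μ {η | ∀ i : Fin n, η i = w i} = (Fintype.card α : ENNReal)⁻¹ ^ n

theorem measure_forall_mem_le
    (hμ : IsUniformBernoulli μ) {n : ℕ} (t : Fin n → Finset α) :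
    μ {η | ∀ i : Fin n, η i ∈ t i} ≤ ∏ i, (#(t i) : ENNReal) / Fintype.card α := by
  classical
  have hcover : {η : ℕ → α | ∀ i : Fin n, η i ∈ t i} ⊆
      ⋃ w ∈ Fintype.piFinset t, {η | ∀ i : Fin n, η i = w i} := fun η hη =>
    Set.mem_iUnion₂.2 ⟨fun i => η i, Fintype.mem_piFinset.2 hη, fun _ => rfl⟩
  calc μ {η | ∀ i : Fin n, η i ∈ t i}
      ≤ ∑ w ∈ Fintype.piFinset t, μ {η | ∀ i : Fin n, η i = w i} :=
        (measure_mono hcover).trans (measure_biUnion_finset_le _ _)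
    _ = ∏ i, (#(t i) : ENNReal) / Fintype.card α := by
        simp only [hμ _, sum_const, Fintype.card_piFinset, nsmul_eq_mul, Nat.cast_prod,
          div_eq_mul_inv, prod_mul_distrib, prod_const, card_univ, Fintype.card_fin]

theorem measure_forall_ge_ne_le [Nonempty α]
    (hμ : IsUniformBernoulli μ) (c : ℕ → α) (N k : ℕ) :
    μ {η | ∀ n, N ≤ n → η n ≠ c n} ≤
      (((Fintype.card α - 1 : ℕ) : ENNReal) / Fintype.card α) ^ k := by
  classical
  set t : Fin (N + k) → Finset α := fun i => if N ≤ (i : ℕ) then univ.erase (c i) else univ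
  have hsub : {η : ℕ → α | ∀ n, N ≤ n → η n ≠ c n} ⊆ {η | ∀ i : Fin (N + k), η i ∈ t i} := by
    intro η hη i
    by_cases hi : N ≤ (i : ℕ)
    · simpa [t, hi] using hη i hi
    · simp [t, hi]
  have hcard : (Fintype.card α : ENNReal) / Fintype.card α = 1 :=
    ENNReal.div_self (by simp) (ENNReal.natCast_ne_top _)
  calc μ {η | ∀ n, N ≤ n → η n ≠ c n}
      ≤ ∏ i, (#(t i) : ENNReal) / Fintype.card α := (measure_mono hsub).trans
        (measure_forall_mem_le hμ t)
    _ = (((Fintype.card α - 1 : ℕ) : ENNReal) / Fintype.card α) ^ k := by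
        have hlow (i : Fin N) : ¬N ≤ (i : ℕ) := not_le.2 i.is_lt
        simp [Fin.prod_univ_add, t, hlow, hcard, card_erase_of_mem]

theorem measure_forall_ge_ne_eq_zero [Nonempty α]
    (hμ : IsUniformBernoulli μ) (c : ℕ → α) (N : ℕ) :
    μ {η | ∀ n, N ≤ n → η n ≠ c n} = 0 := by
  have hlt : ((Fintype.card α - 1 : ℕ) : ENNReal) / Fintype.card α < 1 := by
    rw [ENNReal.div_lt_iff (Or.inl (by simp)) (Or.inl (ENNReal.natCast_ne_top _)), one_mul]
    exact_mod_cast Nat.sub_lt Fintype.card_pos one_pos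
  exact le_zero_iff.1 <| ge_of_tendsto' (ENNReal.tendsto_pow_atTop_nhds_zero_of_lt_one hlt)
    (measure_forall_ge_ne_le hμ c N)

end UniformBernoulli

theorem exists_eventually_zero_iff_of_cofinal_of_compatible {d : ℕ} {ξ η η' : Bd d}
    (hcof : Cofinal η η') (hcomp : Compatible d ξ η') :
    ∃ N, ∀ n, N ≤ n → (η n = 0 ↔ ξ n = 0) := by
  obtain ⟨N, hN⟩ := hcof
  exact ⟨N, fun n hn => by rw [hN n hn, hcomp.1 n]⟩

/-- for `d ≥ 3` and the Bernoulli measure `μ` on `X^ℕ`, the set of points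
`η` admitting some `η'` cofinal with `η` such that `ξ ∼ η'` is a null set. -/
theorem eventual_compatibility_class_null (d : ℕ) (hd : 3 ≤ d) (μ : Measure (Bd d))
    (hμ : ∀ (n : ℕ) (w : Fin n → ZMod d),
      μ {ξ : Bd d | ∀ i : Fin n, ξ (i : ℕ) = w i} = (1 / (d : ENNReal)) ^ n)
    (ξ : Bd d) :
    μ {η : Bd d | ∃ η', Cofinal η η' ∧ Compatible d ξ η'} = 0 := by
  have : Fact (1 < d) := ⟨by omega⟩
  have hμ' : IsUniformBernoulli μ := by
    simpa [IsUniformBernoulli, ZMod.card, one_div] using hμ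
  -- at a position `n` where `η` and `ξ` agree on being zero, `η n` avoids the letter `c n`
  set c : ℕ → ZMod d := fun n => if ξ n = 0 then 1 else 0
  have hsub : {η : Bd d | ∃ η', Cofinal η η' ∧ Compatible d ξ η'} ⊆
      ⋃ N, {η | ∀ n, N ≤ n → η n ≠ c n} := by
    rintro η ⟨η', hcof, hcomp⟩
    obtain ⟨N, hN⟩ := exists_eventually_zero_iff_of_cofinal_of_compatible hcof hcomp
    refine Set.mem_iUnion.2 ⟨N, fun n hn => ?_⟩
    by_cases hξ : ξ n = 0
    · simp [c, hξ, (hN n hn).2 hξ]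
    · simpa [c, hξ] using mt (hN n hn).1 hξ
  exact measure_mono_null hsub
    (measure_iUnion_null (measure_forall_ge_ne_eq_zero hμ' c))

end
end

section
/- Let d ≥ 2 and m ≥ 1 with (d, m) ≠ (2, 1), and let ω ∈ Ω_{d,m}. Then for all ξ, η ∈ X^ℕ with ξ ≠ η, the stabilizer subgroups Stab_{G_ω}(ξ) and Stab_{G_ω}(η) of the spinal group G_ω are distinct; equivalently, the map sending a boundary point to its rooted, directed, labeled Schreier graph is injective on X^ℕ. -/
open MeasureTheory

noncomputable section

/-- The spinal generators, as permutations of the boundary. -/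
def genPerm (d m : ℕ) (ω : ℕ → ((Fin m → ZMod d) →+ ZMod d)) : Set (Equiv.Perm (Bd d)) :=
  {π | ⇑π ∈ genSet d m ω}

/-- The spinal group `G_ω`, the group of permutations of the boundary generated by the
spinal generating set `S`. -/
def spinalGroup (d m : ℕ) (ω : ℕ → ((Fin m → ZMod d) →+ ZMod d)) :
    Subgroup (Equiv.Perm (Bd d)) :=
  Subgroup.closure (genPerm d m ω)

/-!
Suppose `Stab(ξ) = Stab(η)`. Elements of `G_ω` fixing the first letter and acting on the subtree
below the letter `d-1` realise, by the wreath recursion `b_ω = (ω_0(b), 1, …, 1, b_{σω})`, every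
element of the group of the shifted sequence `σω`; so if `ξ` and `η` share their first letter,
their tails have equal stabilizers in `G_{σω}`. It thus suffices to separate two points with
different first letters, which after a power of `a` read `0…` and `δ…` with `δ ≠ 0`. If
`δ ≠ -1`, or `d ≥ 3` (rotate once more), some `b_ω` moves the point beginning with `0` and fixes
the other. If `d = 2` then `m ≥ 2`, so some `y ≠ 0` lies in `ker ω_0`; `b_ω` with `b = y` fixes
everything beginning with `0`, and since `ω_r y ≠ 0` for some `r`, it moves the image of the
other point under an element of `G_ω` carrying it to a word beginning with `(d-1)^r 0`.
-/

section SameFixers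

variable {α : Type*} {G : Subgroup (Equiv.Perm α)} {x y : α}

def SameFixers (G : Subgroup (Equiv.Perm α)) (x y : α) : Prop :=
  ∀ g ∈ G, g x = x ↔ g y = y

theorem SameFixers.symm (h : SameFixers G x y) : SameFixers G y x :=
  fun g hg => (h g hg).symm

theorem SameFixers.apply (h : SameFixers G x y) {π : Equiv.Perm α} (hπ : π ∈ G) :
    SameFixers G (π x) (π y) := by
  intro g hg
  have hconj : ∀ z, g (π z) = π z ↔ (π⁻¹ * g * π) z = z := fun z => by
    rw [Equiv.Perm.mul_apply, Equiv.Perm.mul_apply, Equiv.Perm.inv_eq_iff_eq]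
  rw [hconj, hconj]
  exact h _ (mul_mem (mul_mem (inv_mem hπ) hg) hπ)

theorem sameFixers_of_stabilizer_eq
    (h : MulAction.stabilizer G x = MulAction.stabilizer G y) : SameFixers G x y :=
  fun g hg => by
    simpa only [MulAction.mem_stabilizer_iff, Subgroup.mk_smul, Equiv.Perm.smul_def]
      using SetLike.ext_iff.mp h ⟨g, hg⟩

end SameFixers

theorem exists_ne_zero_map_eq_zero {A B : Type*} [AddZeroClass A] [AddGroup B] {f : B →+ A}
    (hf : Function.Surjective f) (hcard : Nat.card A ≠ Nat.card B) : ∃ y ≠ 0, f y = 0 := by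
  by_contra! h
  have hinj : Function.Injective f :=
    (injective_iff_map_eq_zero f).mpr fun a => not_imp_not.mp (h a)
  exact hcard (Nat.card_eq_of_bijective f ⟨hinj, hf⟩).symm

namespace Spinal

open Function

open scoped Classical

variable {d m : ℕ}

abbrev HomSeq (d m : ℕ) : Type := ℕ → ((Fin m → ZMod d) →+ ZMod d)

def shift (ω : HomSeq d m) : HomSeq d m := fun n => ω (n + 1)

theorem inOmega_shift {ω : HomSeq d m} (hω : InOmega d m ω) : InOmega d m (shift ω) :=
  ⟨fun n => hω.1 (n + 1), fun i b hb =>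
    hω.2 (i + 1) b fun j hj => by
      simpa [shift, Nat.sub_add_cancel (by omega : 1 ≤ j)] using hb (j - 1) (by omega)⟩

def tail (ζ : Bd d) : Bd d := fun k => ζ (k + 1)

@[simp]
theorem tail_apply (ζ : Bd d) (k : ℕ) : tail ζ k = ζ (k + 1) := rfl

theorem ext_zero_tail {ζ ζ' : Bd d} (h0 : ζ 0 = ζ' 0) (ht : tail ζ = tail ζ') : ζ = ζ' := by
  funext n
  cases n with
  | zero => exact h0
  | succ k => exact congrFun ht k

theorem natCast_self_sub_one : (d : ZMod d) - 1 = -1 := by simp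

def rotate (c : ZMod d) (ζ : Bd d) : Bd d := fun n => if n = 0 then ζ 0 + c else ζ n

@[simp]
theorem rotate_apply_zero (c : ZMod d) (ζ : Bd d) : rotate c ζ 0 = ζ 0 + c := rfl

@[simp]
theorem tail_rotate (c : ZMod d) (ζ : Bd d) : tail (rotate c ζ) = tail ζ := rfl

theorem rotate_rotate (c c' : ZMod d) (ζ : Bd d) :
    rotate c (rotate c' ζ) = rotate (c' + c) ζ :=
  ext_zero_tail (by simp [add_assoc]) rfl

@[simp]
theorem rotate_zero (ζ : Bd d) : rotate 0 ζ = ζ := ext_zero_tail (by simp) rfl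

theorem iterate_aMap (j : ℕ) : (aMap d)^[j] = rotate (j : ZMod d) := by
  induction j with
  | zero => funext ζ; simp
  | succ j ih =>
    funext ζ
    rw [iterate_succ_apply', ih, Nat.cast_succ, ← rotate_rotate]
    rfl

def rotatePerm (c : ZMod d) : Equiv.Perm (Bd d) where
  toFun := rotate c
  invFun := rotate (-c)
  left_inv ζ := by simp [rotate_rotate]
  right_inv ζ := by simp [rotate_rotate]

@[simp]
theorem rotatePerm_apply (c : ZMod d) (ζ : Bd d) : rotatePerm c ζ = rotate c ζ := rfl

theorem rotatePerm_mem [NeZero d] (ω : HomSeq d m) (c : ZMod d) :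
    rotatePerm c ∈ spinalGroup d m ω := by
  by_cases hc : c = 0
  · convert one_mem (spinalGroup d m ω)
    ext ζ : 1
    simp [hc]
  · refine Subgroup.subset_closure (Or.inl ⟨c.val, ?_, ?_, ?_⟩)
    · exact Nat.one_le_iff_ne_zero.mpr ((ZMod.val_eq_zero c).not.mpr hc)
    · exact Nat.le_sub_one_of_lt (ZMod.val_lt c)
    · rw [iterate_aMap, ZMod.natCast_zmod_val]
      rfl

def LeavesSpineAt (ζ : Bd d) (r : ℕ) : Prop := (∀ i < r, ζ i = -1) ∧ ζ r = 0

theorem leavesSpineAt_zero_iff {ζ : Bd d} : LeavesSpineAt ζ 0 ↔ ζ 0 = 0 := by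
  simp [LeavesSpineAt]

theorem leavesSpineAt_succ_iff {ζ : Bd d} {k : ℕ} :
    LeavesSpineAt ζ (k + 1) ↔ ζ 0 = -1 ∧ LeavesSpineAt (tail ζ) k := by
  simp only [LeavesSpineAt, tail_apply, Nat.forall_lt_succ_left']
  tauto

theorem bMap_apply_zero (ω : HomSeq d m) (b) (ζ : Bd d) : bMap d m ω b ζ 0 = ζ 0 := by
  simp [bMap]

theorem bMap_apply_succ (ω : HomSeq d m) (b) (ζ : Bd d) (k : ℕ) :
    bMap d m ω b ζ (k + 1) =
      if LeavesSpineAt ζ k then ζ (k + 1) + ω k b else ζ (k + 1) := by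
  simp only [bMap, ne_eq, Nat.add_one_ne_zero, not_false_eq_true, true_and, Nat.add_sub_cancel,
    natCast_self_sub_one]
  by_cases h : LeavesSpineAt ζ k
  · rw [if_pos h, if_pos (show _ ∧ _ from h)]
  · rw [if_neg h, if_neg (show ¬(_ ∧ _) from h)]

theorem bMap_ne_self {ω : HomSeq d m} {b} {ζ : Bd d} {r : ℕ} (hζ : LeavesSpineAt ζ r)
    (hb : ω r b ≠ 0) : bMap d m ω b ζ ≠ ζ := fun h => hb <| by
  simpa [bMap_apply_succ, hζ] using congrFun h (r + 1)

@[simp]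
theorem bMap_zero (ω : HomSeq d m) : bMap d m ω 0 = id := by
  funext ζ n
  simp [bMap]

theorem bMap_eq_self_of_apply_zero (ω : HomSeq d m) (b) {ζ : Bd d} (h0 : ζ 0 ≠ 0)
    (h1 : ζ 0 ≠ -1) : bMap d m ω b ζ = ζ := by
  funext n
  cases n with
  | zero => exact bMap_apply_zero ω b ζ
  | succ k =>
    cases k <;> simp [bMap_apply_succ, leavesSpineAt_zero_iff, leavesSpineAt_succ_iff, h0, h1]

section Recursion

variable [Fact (1 < d)] (ω : HomSeq d m) (b : Fin m → ZMod d) {ζ : Bd d}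

theorem tail_bMap_of_apply_zero_eq_zero (hζ : ζ 0 = 0) :
    tail (bMap d m ω b ζ) = rotate (ω 0 b) (tail ζ) := by
  funext k
  cases k with
  | zero => simp [bMap_apply_succ, leavesSpineAt_zero_iff, hζ, rotate]
  | succ k => simp [bMap_apply_succ, leavesSpineAt_succ_iff, hζ, rotate]

theorem tail_bMap_of_apply_zero_eq_neg_one (hζ : ζ 0 = -1) :
    tail (bMap d m ω b ζ) = bMap d m (shift ω) b (tail ζ) := by
  funext k
  cases k with
  | zero => simp [bMap_apply_succ, bMap_apply_zero, leavesSpineAt_zero_iff, hζ]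
  | succ k => simp [bMap_apply_succ, leavesSpineAt_succ_iff, hζ, shift]

theorem bMap_eq_self_of_map_eq_zero {b} (hb : ω 0 b = 0) (hζ : ζ 0 = 0) :
    bMap d m ω b ζ = ζ :=
  ext_zero_tail (bMap_apply_zero ω b ζ) (by simp [tail_bMap_of_apply_zero_eq_zero ω b hζ, hb])

theorem bMap_bMap (b' : Fin m → ZMod d) (ζ : Bd d) :
    bMap d m ω b (bMap d m ω b' ζ) = bMap d m ω (b + b') ζ := by
  funext n
  induction n generalizing ω ζ with
  | zero => simp only [bMap_apply_zero]
  | succ k ih =>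
    have h0 : bMap d m ω b' ζ 0 = ζ 0 := bMap_apply_zero ω b' ζ
    show tail (bMap d m ω b _) k = tail (bMap d m ω _ ζ) k
    by_cases hz : ζ 0 = 0
    · rw [tail_bMap_of_apply_zero_eq_zero ω b (h0.trans hz),
        tail_bMap_of_apply_zero_eq_zero ω b' hz, tail_bMap_of_apply_zero_eq_zero ω _ hz,
        rotate_rotate, map_add, add_comm]
    by_cases hn : ζ 0 = -1
    · rw [tail_bMap_of_apply_zero_eq_neg_one ω b (h0.trans hn),
        tail_bMap_of_apply_zero_eq_neg_one ω b' hn, tail_bMap_of_apply_zero_eq_neg_one ω _ hn]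
      exact ih (shift ω) (tail ζ)
    · rw [bMap_eq_self_of_apply_zero ω b' hz hn, bMap_eq_self_of_apply_zero ω b hz hn,
        bMap_eq_self_of_apply_zero ω _ hz hn]

def bPerm : Equiv.Perm (Bd d) where
  toFun := bMap d m ω b
  invFun := bMap d m ω (-b)
  left_inv ζ := by simp [bMap_bMap]
  right_inv ζ := by simp [bMap_bMap]

@[simp]
theorem bPerm_apply (ζ : Bd d) : bPerm ω b ζ = bMap d m ω b ζ := rfl

theorem bPerm_mem : bPerm ω b ∈ spinalGroup d m ω := by
  by_cases hb : b = 0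
  · convert one_mem (spinalGroup d m ω)
    ext ζ : 1
    simp [hb]
  · exact Subgroup.subset_closure (Or.inr ⟨b, hb, rfl⟩)

end Recursion

def IsLiftOf (g h : Equiv.Perm (Bd d)) : Prop :=
  (∀ ζ, g ζ 0 = ζ 0) ∧ ∀ ζ, ζ 0 = -1 → tail (g ζ) = h (tail ζ)

theorem IsLiftOf.mul {g h g' h' : Equiv.Perm (Bd d)} (hg : IsLiftOf g h) (hg' : IsLiftOf g' h') :
    IsLiftOf (g * g') (h * h') := by
  refine ⟨fun ζ => by rw [Equiv.Perm.mul_apply, hg.1, hg'.1], fun ζ hζ => ?_⟩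
  rw [Equiv.Perm.mul_apply, hg.2 _ (by rw [hg'.1, hζ]), hg'.2 ζ hζ, Equiv.Perm.mul_apply]

theorem IsLiftOf.inv {g h : Equiv.Perm (Bd d)} (hg : IsLiftOf g h) : IsLiftOf g⁻¹ h⁻¹ := by
  have h0 : ∀ ζ, g⁻¹ ζ 0 = ζ 0 := fun ζ => by simpa using (hg.1 (g⁻¹ ζ)).symm
  refine ⟨h0, fun ζ hζ => ?_⟩
  rw [Equiv.Perm.eq_inv_iff_eq, ← hg.2 _ (by rw [h0, hζ])]
  simp

theorem IsLiftOf.apply_eq_self_iff {g h : Equiv.Perm (Bd d)} (hg : IsLiftOf g h) {ζ : Bd d}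
    (hζ : ζ 0 = -1) : g ζ = ζ ↔ h (tail ζ) = tail ζ := by
  rw [← hg.2 ζ hζ]
  exact ⟨fun e => by rw [e], ext_zero_tail (hg.1 ζ)⟩

section Group

variable [Fact (1 < d)] {ω : HomSeq d m}

@[elab_as_elim]
theorem spinalGroup_induction {p : Equiv.Perm (Bd d) → Prop} (one : p 1)
    (rotate : ∀ c, p (rotatePerm c)) (spinal : ∀ b, p (bPerm ω b))
    (mul : ∀ x y, p x → p y → p (x * y)) (inv : ∀ x, p x → p x⁻¹)
    {g : Equiv.Perm (Bd d)} (hg : g ∈ spinalGroup d m ω) : p g := by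
  induction hg using Subgroup.closure_induction with
  | mem x hx =>
    rcases hx with ⟨j, -, -, hx⟩ | ⟨b, -, hx⟩
    · convert rotate (j : ZMod d)
      ext ζ : 1
      rw [congrFun hx ζ, iterate_aMap]
      rfl
    · convert spinal b
      ext ζ : 1
      exact congrFun hx ζ
  | one => exact one
  | mul x y _ _ hx hy => exact mul x y hx hy
  | inv x _ hx => exact inv x hx

theorem exists_apply_zero_eq_add {g : Equiv.Perm (Bd d)} (hg : g ∈ spinalGroup d m ω) :
    ∃ c : ZMod d, ∀ ζ, g ζ 0 = ζ 0 + c := by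
  refine spinalGroup_induction ⟨0, fun ζ => by simp⟩ (fun c => ⟨c, fun ζ => rfl⟩)
    (fun b => ⟨0, fun ζ => by simp [bMap_apply_zero]⟩) ?_ ?_ hg
  · rintro x y ⟨cx, hx⟩ ⟨cy, hy⟩
    exact ⟨cy + cx, fun ζ => by rw [Equiv.Perm.mul_apply, hx, hy, add_assoc]⟩
  · rintro x ⟨c, hc⟩
    refine ⟨-c, fun ζ => eq_add_neg_of_add_eq ?_⟩
    simpa using (hc (x⁻¹ ζ)).symm

theorem exists_isLiftOf (hsurj : Surjective (ω 0)) {h : Equiv.Perm (Bd d)}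
    (hh : h ∈ spinalGroup d m (shift ω)) : ∃ g ∈ spinalGroup d m ω, IsLiftOf g h := by
  refine spinalGroup_induction ⟨1, one_mem _, fun _ => rfl, fun _ _ => rfl⟩ ?_ ?_ ?_ ?_ hh
  · intro c
    obtain ⟨b, hb⟩ := hsurj c
    refine ⟨rotatePerm (-1) * bPerm ω b * rotatePerm 1,
      mul_mem (mul_mem (rotatePerm_mem ω _) (bPerm_mem ω b)) (rotatePerm_mem ω _),
      fun ζ => by simp [bMap_apply_zero], fun ζ hζ => ?_⟩
    simp [tail_bMap_of_apply_zero_eq_zero ω b (show rotate 1 ζ 0 = 0 by simp [hζ]), hb]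
  · exact fun b => ⟨bPerm ω b, bPerm_mem ω b, bMap_apply_zero ω b,
      fun ζ hζ => tail_bMap_of_apply_zero_eq_neg_one ω b hζ⟩
  · rintro x y ⟨g, hg, hgx⟩ ⟨g', hg', hgy⟩
    exact ⟨g * g', mul_mem hg hg', hgx.mul hgy⟩
  · rintro x ⟨g, hg, hgx⟩
    exact ⟨g⁻¹, inv_mem hg, hgx.inv⟩

theorem exists_mem_apply_eq (hs : ∀ k, Surjective (ω k)) (n : ℕ) (ζ u : Bd d) :
    ∃ π ∈ spinalGroup d m ω, ∀ i < n, π ζ i = u i := by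
  induction n generalizing ω ζ u with
  | zero => exact ⟨1, one_mem _, fun i hi => absurd hi (Nat.not_lt_zero i)⟩
  | succ n ih =>
    obtain ⟨h, hh, hhu⟩ := ih (fun k => hs (k + 1)) (tail ζ) (tail u)
    obtain ⟨g, hg, hgh⟩ := exists_isLiftOf (hs 0) hh
    refine ⟨rotatePerm (u 0 + 1) * g * rotatePerm (-1 - ζ 0),
      mul_mem (mul_mem (rotatePerm_mem ω _) hg) (rotatePerm_mem ω _), ?_⟩
    have hζ : rotate (-1 - ζ 0) ζ 0 = -1 := by simp
    rintro (_ | i) hi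
    · simp [hgh.1]
    · show tail (rotate (u 0 + 1) (g (rotate (-1 - ζ 0) ζ))) i = tail u i
      rw [tail_rotate, hgh.2 _ hζ, tail_rotate]
      exact hhu i (by omega)

theorem sameFixers_tail (hsurj : Surjective (ω 0)) {ξ η : Bd d} (h0 : ξ 0 = η 0)
    (h : SameFixers (spinalGroup d m ω) ξ η) :
    SameFixers (spinalGroup d m (shift ω)) (tail ξ) (tail η) := by
  intro k hk
  obtain ⟨g, hg, hgk⟩ := exists_isLiftOf hsurj hk
  have hfix := h.apply (rotatePerm_mem ω (-1 - ξ 0)) g hg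
  rwa [hgk.apply_eq_self_iff (by simp), hgk.apply_eq_self_iff (by simp [h0]),
    rotatePerm_apply, rotatePerm_apply, tail_rotate, tail_rotate] at hfix

theorem not_sameFixers_of_apply_zero_eq_zero {y : Fin m → ZMod d} (hy : ω 0 y ≠ 0)
    {ξ η : Bd d} (hξ : ξ 0 = 0) (hη0 : η 0 ≠ 0) (hη1 : η 0 ≠ -1) :
    ¬SameFixers (spinalGroup d m ω) ξ η := fun h =>
  bMap_ne_self (leavesSpineAt_zero_iff.mpr hξ) hy <|
    (h _ (bPerm_mem ω y)).mpr (bMap_eq_self_of_apply_zero ω y hη0 hη1)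

theorem not_sameFixers_of_map_eq_zero (hs : ∀ k, Surjective (ω k)) {y : Fin m → ZMod d}
    {r : ℕ} (hy : ω 0 y = 0) (hr : ω r y ≠ 0) {ξ η : Bd d} (hξ : ξ 0 = -1) (hη : η 0 = 0) :
    ¬SameFixers (spinalGroup d m ω) ξ η := by
  intro h
  have hr0 : r ≠ 0 := by
    rintro rfl
    exact hr hy
  obtain ⟨π, hπ, hπξ⟩ := exists_mem_apply_eq hs (r + 1) ξ (fun i => if i = r then 0 else -1)
  have hspine : LeavesSpineAt (π ξ) r :=
    ⟨fun i hi => by simpa [hi.ne] using hπξ i (by omega), by simpa using hπξ r (by omega)⟩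
  obtain ⟨c, hc⟩ := exists_apply_zero_eq_add hπ
  have hc0 : c = 0 := by
    simpa [hspine.1 0 (Nat.pos_of_ne_zero hr0), hξ] using hc ξ
  have hπη : π η 0 = 0 := by rw [hc, hη, hc0, add_zero]
  exact bMap_ne_self hspine hr <|
    (h.apply hπ _ (bPerm_mem ω y)).mpr (bMap_eq_self_of_map_eq_zero ω hy hπη)

theorem not_sameFixers_of_apply_zero_ne (hdm : ¬(d = 2 ∧ m = 1)) (hω : InOmega d m ω)
    {ξ η : Bd d} (hne : ξ 0 ≠ η 0) : ¬SameFixers (spinalGroup d m ω) ξ η := by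
  intro h
  have h' := h.apply (rotatePerm_mem ω (-η 0))
  have hη : rotatePerm (-η 0) η 0 = 0 := by simp
  have hξ : rotatePerm (-η 0) ξ 0 ≠ 0 := by simpa [← sub_eq_add_neg, sub_eq_zero] using hne
  obtain ⟨y, hy⟩ := hω.1 0 1
  have hy0 : ω 0 y ≠ 0 := hy ▸ one_ne_zero
  by_cases hξ1 : rotatePerm (-η 0) ξ 0 = -1
  · rcases eq_or_ne d 2 with rfl | hd2
    · have hcard : Nat.card (ZMod 2) ≠ Nat.card (Fin m → ZMod 2) := by
        rw [Nat.card_fun, Nat.card_zmod, Nat.card_eq_fintype_card, Fintype.card_fin, ne_comm,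
          Ne, Nat.pow_eq_self_iff one_lt_two]
        exact fun hm => hdm ⟨rfl, hm⟩
      obtain ⟨y₀, hy₀, hy₀ker⟩ := exists_ne_zero_map_eq_zero (hω.1 0) hcard
      obtain ⟨r, hr⟩ : ∃ r, ω r y₀ ≠ 0 := by
        by_contra! hall
        exact hy₀ (hω.2 0 y₀ fun j _ => hall j)
      exact not_sameFixers_of_map_eq_zero hω.1 hy₀ker hr hξ1 hη h'
    · have : Fact (2 < d) := ⟨by have := Fact.out (p := 1 < d); omega⟩
      refine not_sameFixers_of_apply_zero_eq_zero hy0 ?_ ?_ ?_ (h'.apply (rotatePerm_mem ω 1))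
      · rw [rotatePerm_apply 1, rotate_apply_zero, hξ1, neg_add_cancel]
      · rw [rotatePerm_apply 1, rotate_apply_zero, hη, zero_add]
        exact one_ne_zero
      · rw [rotatePerm_apply 1, rotate_apply_zero, hη, zero_add]
        exact ZMod.neg_one_ne_one.symm
  · exact not_sameFixers_of_apply_zero_eq_zero hy0 hη hξ hξ1 h'.symm

theorem eq_of_sameFixers (hdm : ¬(d = 2 ∧ m = 1)) (hω : InOmega d m ω) {ξ η : Bd d}
    (h : SameFixers (spinalGroup d m ω) ξ η) : ξ = η := by
  funext n
  induction n generalizing ω ξ η with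
  | zero => exact not_not.mp fun h0 => not_sameFixers_of_apply_zero_ne hdm hω h0 h
  | succ n ih =>
    by_cases h0 : ξ 0 = η 0
    · exact ih (inOmega_shift hω) (sameFixers_tail (hω.1 0) h0 h)
    · exact absurd h (not_sameFixers_of_apply_zero_ne hdm hω h0)

end Group

end Spinal

theorem stabilizers_distinct_general (d m : ℕ) (hd : 2 ≤ d)
    (hdm : ¬(d = 2 ∧ m = 1))
    (ω : ℕ → ((Fin m → ZMod d) →+ ZMod d)) (hω : InOmega d m ω)
    (ξ η : Bd d) (hne : ξ ≠ η) :
    MulAction.stabilizer (spinalGroup d m ω) ξ ≠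
      MulAction.stabilizer (spinalGroup d m ω) η := by
  have : Fact (1 < d) := ⟨hd⟩
  exact fun h => hne (Spinal.eq_of_sameFixers hdm hω (sameFixers_of_stabilizer_eq h))

/-- for `(d, m) ≠ (2, 1)` and `ω ∈ Ω_{d,m}`, distinct boundary points have
distinct stabilizers in the spinal group `G_ω`; equivalently, the map sending a boundary
point to its rooted, directed, labeled Schreier graph is injective. -/
theorem stabilizers_distinct (d m : ℕ) (hd : 2 ≤ d) (hm : 1 ≤ m)
    (hdm : ¬(d = 2 ∧ m = 1))
    (ω : ℕ → ((Fin m → ZMod d) →+ ZMod d)) (hω : InOmega d m ω)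
    (ξ η : Bd d) (hne : ξ ≠ η) :
    MulAction.stabilizer (spinalGroup d m ω) ξ ≠
      MulAction.stabilizer (spinalGroup d m ω) η :=
  stabilizers_distinct_general d m hd hdm ω hω ξ η hne

end
end
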